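/- Let h : 𝔤* × V* × V → ℝ be continuously differentiable. For each point z = (μ,σ,n), let u(z) ∈ 𝔤 and ν(z) ∈ V be the unique elements with D_μ h(z)(β) = β(u(z)) for all β ∈ 𝔤* and D_σ h(z)(w) = w(ν(z)) for all w ∈ V*, and write a(z) := D_n h(z) ∈ V*. Suppose differentiable curves μ : ℝ → 𝔤*, σ : ℝ → V*, n : ℝ → V satisfy the Hamiltonian metamorphosis system: μ'(t) + ad*_{u_t} μ(t) + σ(t) ⋄ ν_t − a_t ⋄ n(t) = 0, σ'(t) + u_t ⋆ σ(t) + a_t = 0, and n'(t) = u_t·n(t) + ν_t, where u_t := u(μ(t),σ(t),n(t)), ν_t := ν(μ(t),σ(t),n(t)), a_t := a(μ(t),σ(t),n(t)). Then the total momentum M(t) := μ(t) + σ(t) ⋄ n(t) is differentiable and satisfies M'(t) + ad*_{u_t} M(t) = 0 for all t. -/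

import Mathlib

open Module

variable {G V : Type*}
  [NormedAddCommGroup G] [NormedSpace ℝ G] [FiniteDimensional ℝ G]
  [NormedAddCommGroup V] [NormedSpace ℝ V] [FiniteDimensional ℝ V]

/-- The diamond operator `⋄ : V* × V → 𝔤*`, `⟨σ ⋄ v, u⟩ = -⟨σ, u·v⟩`, where the
`𝔤`-action on `V` is given by the bilinear map `ρ`. -/
noncomputable def dia (ρ : G →ₗ[ℝ] V →ₗ[ℝ] V) (σ : V →L[ℝ] ℝ) (v : V) : G →L[ℝ] ℝ :=
  LinearMap.toContinuousLinearMap (-((σ : V →ₗ[ℝ] ℝ) ∘ₗ (ρ.flip v)))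

/-- The star operator `⋆ : 𝔤 × V* → V*`, `⟨u ⋆ σ, v⟩ = ⟨σ, u·v⟩`. -/
noncomputable def starOp (ρ : G →ₗ[ℝ] V →ₗ[ℝ] V) (u : G) (σ : V →L[ℝ] ℝ) : V →L[ℝ] ℝ :=
  LinearMap.toContinuousLinearMap ((σ : V →ₗ[ℝ] ℝ) ∘ₗ (ρ u))

/-- The coadjoint operator `ad*_u : 𝔤* → 𝔤*`, `⟨ad*_u μ, ξ⟩ = ⟨μ, [u, ξ]⟩`, where the
Lie bracket on `𝔤` is given by the bilinear map `bra`. -/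
noncomputable def coad (bra : G →ₗ[ℝ] G →ₗ[ℝ] G) (u : G) (μ : G →L[ℝ] ℝ) : G →L[ℝ] ℝ :=
  LinearMap.toContinuousLinearMap ((μ : G →ₗ[ℝ] ℝ) ∘ₗ (bra u))


lemma dia_apply (ρ : G →ₗ[ℝ] V →ₗ[ℝ] V) (σ : V →L[ℝ] ℝ) (v : V) (ξ : G) :
    dia ρ σ v ξ = -(σ (ρ ξ v)) := by
  simp [dia]

lemma coad_apply (bra : G →ₗ[ℝ] G →ₗ[ℝ] G) (u : G) (μ : G →L[ℝ] ℝ) (ξ : G) :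
    coad bra u μ ξ = μ (bra u ξ) := by
  simp [coad]

lemma starOp_apply (ρ : G →ₗ[ℝ] V →ₗ[ℝ] V) (u : G) (σ : V →L[ℝ] ℝ) (v : V) :
    starOp ρ u σ v = σ (ρ u v) := by
  simp [starOp]

noncomputable def diaL (ρ : G →ₗ[ℝ] V →ₗ[ℝ] V) :
    (V →L[ℝ] ℝ) →L[ℝ] V →L[ℝ] (G →L[ℝ] ℝ) :=
  LinearMap.toContinuousLinearMap
  { toFun := fun σ => LinearMap.toContinuousLinearMap
      { toFun := fun v => dia ρ σ v
        map_add' := by intro a b; ext ξ; simp [dia_apply]; ring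
        map_smul' := by intro c a; ext ξ; simp [dia_apply] }
    map_add' := by intro a b; ext v ξ; simp [dia_apply]; ring
    map_smul' := by intro c a; ext v ξ; simp [dia_apply] }

lemma diaL_apply (ρ : G →ₗ[ℝ] V →ₗ[ℝ] V) (σ : V →L[ℝ] ℝ) (v : V) :
    diaL ρ σ v = dia ρ σ v := rfl

/-- Solutions of the Hamiltonian metamorphosis system
`μ' + ad*_{u} μ + σ ⋄ ν − a ⋄ n = 0`, `σ' + u ⋆ σ + a = 0`, `n' = u·n + ν`
(where `u, ν, a` represent the partial derivatives of a C¹ Hamiltonian `h`)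
have a differentiable total momentum `M(t) := μ(t) + σ(t) ⋄ n(t)` satisfying
the coadjoint motion equation `M' + ad*_u M = 0`. -/
theorem hamiltonian_total_momentum_coadjoint
    (bra : G →ₗ[ℝ] G →ₗ[ℝ] G)
    (hskew : ∀ x : G, bra x x = 0)
    (hjac : ∀ x y z : G, bra x (bra y z) + bra y (bra z x) + bra z (bra x y) = 0)
    (ρ : G →ₗ[ℝ] V →ₗ[ℝ] V)
    (hrep : ∀ (x y : G) (v : V), ρ (bra x y) v = ρ x (ρ y v) - ρ y (ρ x v))
    (h : (G →L[ℝ] ℝ) × (V →L[ℝ] ℝ) × V → ℝ) (hh : ContDiff ℝ 1 h)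
    (uF : (G →L[ℝ] ℝ) × (V →L[ℝ] ℝ) × V → G)
    (νF : (G →L[ℝ] ℝ) × (V →L[ℝ] ℝ) × V → V)
    (huF : ∀ (z : (G →L[ℝ] ℝ) × (V →L[ℝ] ℝ) × V) (β : G →L[ℝ] ℝ),
      fderiv ℝ (fun μ' => h (μ', z.2.1, z.2.2)) z.1 β = β (uF z))
    (hνF : ∀ (z : (G →L[ℝ] ℝ) × (V →L[ℝ] ℝ) × V) (w : V →L[ℝ] ℝ),
      fderiv ℝ (fun σ' => h (z.1, σ', z.2.2)) z.2.1 w = w (νF z))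
    (μ : ℝ → G →L[ℝ] ℝ) (σ : ℝ → V →L[ℝ] ℝ) (n : ℝ → V)
    (hμ : Differentiable ℝ μ) (hσ : Differentiable ℝ σ) (hn : Differentiable ℝ n)
    (heq1 : ∀ t, deriv μ t + coad bra (uF (μ t, σ t, n t)) (μ t)
        + dia ρ (σ t) (νF (μ t, σ t, n t))
        - dia ρ (fderiv ℝ (fun n' => h (μ t, σ t, n')) (n t)) (n t) = 0)
    (heq2 : ∀ t, deriv σ t + starOp ρ (uF (μ t, σ t, n t)) (σ t)
        + fderiv ℝ (fun n' => h (μ t, σ t, n')) (n t) = 0)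
    (heq3 : ∀ t, deriv n t = ρ (uF (μ t, σ t, n t)) (n t) + νF (μ t, σ t, n t)) :
    Differentiable ℝ (fun t => μ t + dia ρ (σ t) (n t))
    ∧ ∀ t, deriv (fun t => μ t + dia ρ (σ t) (n t)) t
        + coad bra (uF (μ t, σ t, n t)) (μ t + dia ρ (σ t) (n t)) = 0 := by
  have key : ∀ t, HasDerivAt (fun t => dia ρ (σ t) (n t))
      (dia ρ (deriv σ t) (n t) + dia ρ (σ t) (deriv n t)) t := by
    intro t
    have hD : HasFDerivAt (diaL ρ) (diaL ρ) (σ t) := by fun_prop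
    have h1 : HasDerivAt (fun s => diaL ρ (σ s)) (diaL ρ (deriv σ t)) t :=
      HasFDerivAt.comp_hasDerivAt (𝕜 := ℝ) (F := V →L[ℝ] ℝ) (E := V →L[ℝ] G →L[ℝ] ℝ) t hD
        (hσ t).hasDerivAt
    have h2 := h1.clm_apply (hn t).hasDerivAt
    simpa [diaL_apply] using h2
  refine ⟨fun t => ((hμ t).hasDerivAt.add (key t)).differentiableAt, fun t => ?_⟩
  rw [(show HasDerivAt (fun t => μ t + dia ρ (σ t) (n t)) _ t from
    (hμ t).hasDerivAt.add (key t)).deriv]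
  ext ξ
  have e1 := congrFun (congrArg DFunLike.coe (heq1 t)) ξ
  have e2 := congrFun (congrArg DFunLike.coe (heq2 t)) ((ρ ξ) (n t))
  have e3 := congrArg (fun v => (σ t) ((ρ ξ) v)) (heq3 t)
  have e4 := congrArg (σ t) (hrep (uF (μ t, σ t, n t)) ξ (n t))
  simp only [map_add, map_sub] at e3 e4
  simp only [ContinuousLinearMap.add_apply, ContinuousLinearMap.sub_apply,
    ContinuousLinearMap.zero_apply, dia_apply, coad_apply, starOp_apply] at e1 e2 ⊢
  linarith
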